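/- arXiv:2212.05047 — 2 statements merged into one kernel-verified Lean document; each statement's English description precedes it below -/
import Mathlib

section
/- Let D be a bounded domain in ℂ, g : D → ℝ be in L¹(D), and let u be a weak solution of the equation div(A(z)∇u(z)) = g(z) with a matrix function A : D → S^{2×2} whose elements a_ij(z), i,j = 1,2, are bounded and measurable. If v is A-conjugate of u, then ω := u + iv satisfies the nondegenerate inhomogeneous Beltrami equation ω_{z̄} = μ(z)·ω_z + σ(z) with μ(z) := (a_22(z) − a_11(z) − 2i·a_21(z)) / det(I + A(z)) and σ(z) := 𝒩^g_{z̄}(z) + μ(z)·conj(𝒩^g_{z̄}(z)). -/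
open MeasureTheory Set Filter Topology Metric Complex Bornology Matrix

noncomputable section

/-- Pointwise Wirtinger derivative `∂f/∂z = (f_x − i f_y)/2`. -/
def wDz (f : ℂ → ℂ) (z : ℂ) : ℂ :=
  (fderiv ℝ f z 1 - Complex.I * fderiv ℝ f z Complex.I) / 2

/-- Pointwise Wirtinger derivative `∂f/∂z̄ = (f_x + i f_y)/2`. -/
def wDzbar (f : ℂ → ℂ) (z : ℂ) : ℂ :=
  (fderiv ℝ f z 1 + Complex.I * fderiv ℝ f z Complex.I) / 2

/-- `∂h/∂z̄` of a real-valued function, as a complex number. -/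
def wDzbarR (h : ℂ → ℝ) (z : ℂ) : ℂ :=
  (((fderiv ℝ h z 1 : ℝ) : ℂ) + Complex.I * ((fderiv ℝ h z Complex.I : ℝ) : ℂ)) / 2

/-- Real-valued test functions of class `C^n` with compact support in `D`. -/
def TestFunR (n : ℕ∞) (D : Set ℂ) (φ : ℂ → ℝ) : Prop :=
  ContDiff ℝ n φ ∧ HasCompactSupport φ ∧ tsupport φ ⊆ D

/-- Complex-valued test functions of class `C^n` with compact support in `D`. -/
def TestFunC (n : ℕ∞) (D : Set ℂ) (φ : ℂ → ℂ) : Prop :=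
  ContDiff ℝ n φ ∧ HasCompactSupport φ ∧ tsupport φ ⊆ D

/-- `f₁` is the weak (distributional) Wirtinger `∂/∂z`–derivative of `f` on `D`. -/
def HasWeakDzOn (f f₁ : ℂ → ℂ) (D : Set ℂ) : Prop :=
  ∀ φ : ℂ → ℂ, TestFunC ⊤ D φ →
    (∫ z in D, f z * wDz φ z) = - ∫ z in D, f₁ z * φ z

/-- `f₂` is the weak (distributional) Wirtinger `∂/∂z̄`–derivative of `f` on `D`. -/
def HasWeakDzbarOn (f f₂ : ℂ → ℂ) (D : Set ℂ) : Prop :=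
  ∀ φ : ℂ → ℂ, TestFunC ⊤ D φ →
    (∫ z in D, f z * wDzbar φ z) = - ∫ z in D, f₂ z * φ z

/-- `g` is the weak partial derivative of `u` on `D` in the direction `v`. -/
def HasWeakPartialOn (u g : ℂ → ℝ) (v : ℂ) (D : Set ℂ) : Prop :=
  ∀ φ : ℂ → ℝ, TestFunR ⊤ D φ →
    (∫ z in D, u z * fderiv ℝ φ z v) = - ∫ z in D, g z * φ z

/-- `gu` is the weak gradient of `u` on `D`. -/
def HasWeakGradientOn (u : ℂ → ℝ) (gu : ℂ → Fin 2 → ℝ) (D : Set ℂ) : Prop :=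
  HasWeakPartialOn u (fun z => gu z 0) 1 D ∧ HasWeakPartialOn u (fun z => gu z 1) Complex.I D

/-- Membership in `L^p(D)`. -/
def MemLpOn {E : Type*} [NormedAddCommGroup E] (f : ℂ → E) (p : ℝ) (D : Set ℂ) : Prop :=
  MemLp f (ENNReal.ofReal p) (volume.restrict D)

/-- Membership in `L^p_loc(D)`. -/
def MemLpLocOn {E : Type*} [NormedAddCommGroup E] (f : ℂ → E) (p : ℝ) (D : Set ℂ) : Prop :=
  ∀ z ∈ D, ∃ U : Set ℂ, IsOpen U ∧ z ∈ U ∧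
    MemLp f (ENNReal.ofReal p) (volume.restrict (D ∩ U))

/-- Membership in the Sobolev class `W^{1,p}_loc(D)` for complex-valued functions,
via weak Wirtinger derivatives. -/
def MemW1pLocC (f : ℂ → ℂ) (p : ℝ) (D : Set ℂ) : Prop :=
  ∃ f₁ f₂ : ℂ → ℂ, HasWeakDzOn f f₁ D ∧ HasWeakDzbarOn f f₂ D ∧
    MemLpLocOn f₁ p D ∧ MemLpLocOn f₂ p D

/-- Hölder continuity of order `a` on a set `D`. -/
def HolderOnSet {E : Type*} [NormedAddCommGroup E] (f : ℂ → E) (a : ℝ) (D : Set ℂ) : Prop :=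
  ∃ C : ℝ, ∀ z ∈ D, ∀ w ∈ D, ‖f z - f w‖ ≤ C * ‖z - w‖ ^ a

/-- Local Hölder continuity of order `a` on `D`, i.e. the class `C^a_loc(D)`. -/
def HolderLocOn {E : Type*} [NormedAddCommGroup E] (f : ℂ → E) (a : ℝ) (D : Set ℂ) : Prop :=
  ∀ z ∈ D, ∃ U : Set ℂ, IsOpen U ∧ z ∈ U ∧ HolderOnSet f a (D ∩ U)

/-- The Ahlfors–Bers singular integral operator `T`, defined through the Cauchy
principal limit of the singular integral. -/
def cauchyT (g : ℂ → ℂ) (ζ : ℂ) : ℂ :=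
  limUnder (𝓝[>] (0 : ℝ)) fun ε : ℝ =>
    -(Real.pi : ℂ)⁻¹ * ∫ z in {z : ℂ | ε < ‖z - ζ‖}, g z / (z - ζ) ^ 2

/-- `Cp p` : the norm of the operator `T : L^p(ℂ) → L^p(ℂ)`. -/
def Cp (p : ℝ) : ℝ :=
  sInf {C : ℝ | 0 ≤ C ∧ ∀ g : ℂ → ℂ, MemLp g (ENNReal.ofReal p) volume →
    eLpNorm (cauchyT g) (ENNReal.ofReal p) volume ≤
      ENNReal.ofReal C * eLpNorm g (ENNReal.ofReal p) volume}

/-- `f` is a `μ`-conformal mapping of the plane: a homeomorphism of `ℂ` of class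
`W^{1,2}_loc` satisfying the Beltrami equation `f_z̄ = μ f_z` a.e. -/
def MuConformal (μ : ℂ → ℂ) (f : ℂ ≃ₜ ℂ) : Prop :=
  ∃ f₁ f₂ : ℂ → ℂ, HasWeakDzOn (⇑f) f₁ Set.univ ∧ HasWeakDzbarOn (⇑f) f₂ Set.univ ∧
    MemLpLocOn f₁ 2 Set.univ ∧ MemLpLocOn f₂ 2 Set.univ ∧
    ∀ᵐ z ∂(volume : Measure ℂ), f₂ z = μ z * f₁ z

/-- The (pointwise) Jacobian `J = |f_z|² − |f_z̄|²`. -/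
def jacDet (f : ℂ → ℂ) (z : ℂ) : ℝ :=
  ‖wDz f z‖ ^ 2 - ‖wDzbar f z‖ ^ 2

/-- `p_* = p²/(2(p−1))`. -/
def pStar (p : ℝ) : ℝ := p ^ 2 / (2 * (p - 1))

/-- The multiplier `g := ((f_z / J) · σ) ∘ f⁻¹`. -/
def gMul (f : ℂ ≃ₜ ℂ) (σ : ℂ → ℂ) (w : ℂ) : ℂ :=
  (wDz (⇑f) (f.symm w) / ((jacDet (⇑f) (f.symm w) : ℝ) : ℂ)) * σ (f.symm w)

/-- The class `S^{2×2}` : symmetric matrices with `det A = 1` and `det (I + A) > 0`. -/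
def InS22 (M : Matrix (Fin 2) (Fin 2) ℝ) : Prop :=
  M 0 1 = M 1 0 ∧ M.det = 1 ∧ 0 < (1 + M).det

/-- The complex coefficient `μ_A = (a₂₂ − a₁₁ − 2 i a₂₁)/det(I + A)`. -/
def muOfA (A : ℂ → Matrix (Fin 2) (Fin 2) ℝ) (z : ℂ) : ℂ :=
  (((A z 1 1 - A z 0 0 : ℝ) : ℂ) - 2 * Complex.I * ((A z 1 0 : ℝ) : ℂ)) /
    ((((1 + A z).det : ℝ)) : ℂ)

/-- The matrix associated with a Beltrami coefficient `μ`. -/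
def AOfMu (μ : ℂ → ℂ) (z : ℂ) : Matrix (Fin 2) (Fin 2) ℝ :=
  !![‖1 - μ z‖ ^ 2 / (1 - ‖μ z‖ ^ 2),
      -2 * (μ z).im / (1 - ‖μ z‖ ^ 2);
     -2 * (μ z).im / (1 - ‖μ z‖ ^ 2),
      ‖1 + μ z‖ ^ 2 / (1 - ‖μ z‖ ^ 2)]

/-- The gradient of a (test) function as a vector in `ℝ²`. -/
def gradVec (ψ : ℂ → ℝ) (z : ℂ) : Fin 2 → ℝ := ![fderiv ℝ ψ z 1, fderiv ℝ ψ z Complex.I]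

/-- The weak form of the identity `div (A ∇u) = h` on `D`, tested against `C^n_0(D)`:
`∫ ⟨A ∇u, ∇ψ⟩ + ∫ h ψ = 0`. -/
def DivIdentity (A : ℂ → Matrix (Fin 2) (Fin 2) ℝ) (gu : ℂ → Fin 2 → ℝ) (h : ℂ → ℝ)
    (D : Set ℂ) (n : ℕ∞) : Prop :=
  ∀ ψ : ℂ → ℝ, TestFunR n D ψ →
    (∫ z in D, dotProduct ((A z).mulVec (gu z)) (gradVec ψ z)) +
      (∫ z in D, h z * ψ z) = 0

/-- `u` is a weak solution of `div (A ∇u) = h` on `D`, with weak gradient `gu`,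
in the class `W^{1,1}_loc(D)`. -/
def IsWeakSolutionDiv (A : ℂ → Matrix (Fin 2) (Fin 2) ℝ) (h : ℂ → ℝ) (u : ℂ → ℝ)
    (gu : ℂ → Fin 2 → ℝ) (D : Set ℂ) (n : ℕ∞) : Prop :=
  LocallyIntegrableOn u D ∧ LocallyIntegrableOn gu D ∧
    HasWeakGradientOn u gu D ∧ DivIdentity A gu h D n

/-- The logarithmic (Newtonian) potential of the source `g` on `D`. -/
def logPot (g : ℂ → ℝ) (D : Set ℂ) (z : ℂ) : ℝ :=
  (2 * Real.pi)⁻¹ * ∫ w in D, Real.log (‖z - w‖) * g w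

/-- `σ = 𝒩^g_z̄ + μ ⋅ conj 𝒩^g_z̄`. -/
def sigmaOf (g : ℂ → ℝ) (D : Set ℂ) (μ : ℂ → ℂ) (z : ℂ) : ℂ :=
  wDzbarR (logPot g D) z + μ z * (starRingEnd ℂ) (wDzbarR (logPot g D) z)

/-- The Hodge operator `ℍ = [[0,−1],[1,0]]` acting on vectors of `ℝ²`. -/
def hodge (v : Fin 2 → ℝ) : Fin 2 → ℝ := ![-(v 1), v 0]

/-- The quasihyperbolic distance in `D`. -/
def qhDist (D : Set ℂ) (z w : ℂ) : ℝ :=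
  sInf {L : ℝ | ∃ γ : ℝ → ℂ, γ 0 = z ∧ γ 1 = w ∧ (∀ t ∈ Icc (0:ℝ) 1, γ t ∈ D) ∧
    ContDiff ℝ 1 γ ∧ L = ∫ t in Icc (0:ℝ) 1, ‖deriv γ t‖ / infDist (γ t) (frontier D)}

/-- The quasihyperbolic boundary condition of Gehring–Martio. -/
def QuasihyperbolicBC (D : Set ℂ) : Prop :=
  ∃ z₀ ∈ D, ∃ a b : ℝ, ∀ z ∈ D,
    qhDist D z z₀ ≤ a + b * Real.log (infDist z₀ (frontier D) / infDist z (frontier D))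

/-- `τ` is a tangent direction to `∂D` at `ζ`. -/
def TangentDirAt (D : Set ℂ) (ζ τ : ℂ) : Prop :=
  ‖τ‖ = 1 ∧ ∀ ε : ℝ, 0 < ε → ∃ δ : ℝ, 0 < δ ∧ ∀ w ∈ frontier D,
    ‖w - ζ‖ < δ → |((w - ζ) / τ).im| ≤ ε * ‖w - ζ‖

/-- `∂D` has a tangent at `ζ`. -/
def HasTangentAt (D : Set ℂ) (ζ : ℂ) : Prop := ∃ τ : ℂ, TangentDirAt D ζ τ

/-- `E` has logarithmic capacity zero: every probability measure concentrated on `E`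
has infinite logarithmic energy. -/
def CapZero (E : Set ℂ) : Prop :=
  ∀ μ : Measure ℂ, IsProbabilityMeasure μ → μ Eᶜ = 0 →
    (∫⁻ z, ∫⁻ w, ENNReal.ofReal (-Real.log (‖z - w‖)) ∂μ ∂μ) = ⊤

/-- `P` holds quasi-everywhere (q.e.) on `B`, i.e. up to a set of logarithmic capacity zero. -/
def QEOn (B : Set ℂ) (P : ℂ → Prop) : Prop := CapZero {ζ | ζ ∈ B ∧ ¬P ζ}

/-- A set measurable with respect to logarithmic capacity: a union of a sigma-compactum
and a set of capacity zero. -/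
def CapMeasurableSet (S : Set ℂ) : Prop :=
  ∃ K Z : Set ℂ, (∃ c : ℕ → Set ℂ, (∀ n, IsCompact (c n)) ∧ K = ⋃ n, c n) ∧
    CapZero Z ∧ S = K ∪ Z

/-- A real-valued boundary function measurable with respect to logarithmic capacity. -/
def CapMeasurableOn (φ : ℂ → ℝ) (B : Set ℂ) : Prop :=
  ∀ O : Set ℝ, IsOpen O → CapMeasurableSet {ζ | ζ ∈ B ∧ φ ζ ∈ O}

/-- `lam` is of countably bounded variation on `B`: there is a countable family of
mutually disjoint arcs of `B` on each of which `lam` has bounded variation, whose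
complement in `B` has logarithmic capacity zero. -/
def CBVOn (lam : ℂ → ℂ) (B : Set ℂ) : Prop :=
  ∃ γ : ℕ → ℝ → ℂ,
    (∀ n : ℕ, ContinuousOn (γ n) (Icc 0 1) ∧ InjOn (γ n) (Icc 0 1) ∧
      γ n '' Ioo 0 1 ⊆ B ∧ BoundedVariationOn (lam ∘ γ n) (Ioo 0 1)) ∧
    Pairwise (fun m n => Disjoint (γ m '' Ioo 0 1) (γ n '' Ioo 0 1)) ∧
    CapZero (B \ ⋃ n, γ n '' Ioo 0 1)

/-- A Jordan domain: a bounded domain whose boundary is a Jordan curve. -/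
def JordanDomain (D : Set ℂ) : Prop :=
  IsOpen D ∧ IsConnected D ∧ IsBounded D ∧
    ∃ γ : ℝ → ℂ, Continuous γ ∧ Function.Periodic γ 1 ∧ InjOn γ (Ico 0 1) ∧
      frontier D = γ '' Ico 0 1

/-- `f` has the angular (nontangential) limit `L` at the boundary point `ζ` of `D`. -/
def AngularLimitAt {E : Type*} [TopologicalSpace E] (f : ℂ → E) (D : Set ℂ) (ζ : ℂ)
    (L : E) : Prop :=
  ∀ c : ℝ, 1 < c →
    Tendsto f (𝓝[{z | z ∈ D ∧ ‖z - ζ‖ ≤ c * infDist z (frontier D)}] ζ) (𝓝 L)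

/-- The class `C^{1,a}_loc(D)` of functions with locally Hölder continuous derivatives. -/
def MemC1HolderLocOn (u : ℂ → ℝ) (a : ℝ) (D : Set ℂ) : Prop :=
  ∀ z ∈ D, ∃ U : Set ℂ, IsOpen U ∧ z ∈ U ∧ U ⊆ D ∧ ContDiffOn ℝ 1 u U ∧
    ∃ C : ℝ, ∀ x ∈ U, ∀ y ∈ U, ‖fderiv ℝ u x - fderiv ℝ u y‖ ≤ C * ‖x - y‖ ^ a

/-- `n` is the unit inner normal to `∂D` at `ζ`. -/
def IsInnerNormalAt (D : Set ℂ) (ζ n : ℂ) : Prop :=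
  ‖n‖ = 1 ∧ TangentDirAt D ζ (Complex.I * n) ∧
    ∃ ε : ℝ, 0 < ε ∧ ∀ t ∈ Ioo (0:ℝ) ε, ζ + (t : ℂ) * n ∈ D

/-! Weak derivatives are linear, so `ω = u + iv` has the weak Wirtinger derivatives
`ω_z = (∂₁ω − i∂₂ω)/2` and `ω_z̄ = (∂₁ω + i∂₂ω)/2` with `∂ₖω = ∂ₖu + i∂ₖv`. Substituting
`∇v = ℍ(A∇u − ∇𝒩^g)` turns the Beltrami equation into a pointwise identity between complex
numbers, which holds because `det A = 1`, i.e. `det(I + A) = 2 + tr A`. -/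

section WeakDerivatives

open Function

theorem MeasureTheory.LocallyIntegrableOn.integrableOn_mul_of_tsupport_subset
    {X 𝕜 : Type*} [TopologicalSpace X] [MeasurableSpace X] [OpensMeasurableSpace X]
    [NormedRing 𝕜] [SecondCountableTopologyEither X 𝕜] {μ : Measure X} {s : Set X}
    {f φ : X → 𝕜}
    (hf : LocallyIntegrableOn f s μ) (hφ : Continuous φ) (hφs : HasCompactSupport φ)
    (hsub : tsupport φ ⊆ s) : IntegrableOn (fun x => f x * φ x) s μ := by
  have hsupp : support (fun x => f x * φ x) ⊆ tsupport φ :=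
    (support_mul_subset_right f φ).trans (subset_tsupport φ)
  obtain ⟨C, hC⟩ := hφs.exists_bound_of_continuous hφ
  have hint : IntegrableOn (fun x => f x * φ x) (tsupport φ) μ :=
    (hf.integrableOn_compact_subset hsub hφs).mul_bdd hφ.aestronglyMeasurable.restrict
      (ae_of_all _ hC)
  exact ((integrableOn_iff_integrable_of_support_subset hsupp).1 hint).integrableOn

theorem MeasureTheory.LocallyIntegrableOn.eval {X ι : Type*} [TopologicalSpace X]
    [MeasurableSpace X] {μ : Measure X} {s : Set X} [Fintype ι] {E : ι → Type*}
    [∀ i, NormedAddCommGroup (E i)] {f : X → Π i, E i} (hf : LocallyIntegrableOn f s μ)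
    (i : ι) : LocallyIntegrableOn (f · i) s μ := fun x hx =>
  let ⟨t, ht, h⟩ := hf x hx
  ⟨t, ht, Integrable.eval h i⟩

variable {D : Set ℂ}

theorem TestFunC.integrableOn_mul {n : ℕ∞} {f φ : ℂ → ℂ} (hφ : TestFunC n D φ)
    (hf : LocallyIntegrableOn f D) : IntegrableOn (fun z => f z * φ z) D :=
  hf.integrableOn_mul_of_tsupport_subset hφ.1.continuous hφ.2.1 hφ.2.2

theorem TestFunC.fderiv_apply {φ : ℂ → ℂ} (hφ : TestFunC ⊤ D φ) (e : ℂ) :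
    TestFunC ⊤ D (fun z => fderiv ℝ φ z e) :=
  ⟨(hφ.1.fderiv_right le_rfl).clm_apply contDiff_const,
    (hφ.2.1.fderiv ℝ).comp_left (g := fun L : ℂ →L[ℝ] ℂ => L e) rfl,
    (closure_mono (support_comp_subset (g := fun L : ℂ →L[ℝ] ℂ => L e) rfl _)).trans
      ((tsupport_fderiv_subset ℝ).trans hφ.2.2)⟩

theorem TestFunC.clm_comp {n : ℕ∞} {φ : ℂ → ℂ} (hφ : TestFunC n D φ) (L : ℂ →L[ℝ] ℝ) :
    TestFunR n D (fun z => L (φ z)) :=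
  ⟨L.contDiff.comp hφ.1, hφ.2.1.comp_left (map_zero L),
    (closure_mono (support_comp_subset (map_zero L) φ)).trans hφ.2.2⟩

/-- Local integrability of `F` and `G` is bundled so that the notion is linear. -/
def HasWeakPartialOnC (F G : ℂ → ℂ) (e : ℂ) (D : Set ℂ) : Prop :=
  LocallyIntegrableOn F D ∧ LocallyIntegrableOn G D ∧
    ∀ φ : ℂ → ℂ, TestFunC ⊤ D φ → (∫ z in D, F z * fderiv ℝ φ z e) = -∫ z in D, G z * φ z

theorem HasWeakPartialOn.ofReal {u g : ℂ → ℝ} {e : ℂ} (hu : LocallyIntegrableOn u D)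
    (hg : LocallyIntegrableOn g D) (h : HasWeakPartialOn u g e D) :
    HasWeakPartialOnC (fun z => (u z : ℂ)) (fun z => (g z : ℂ)) e D := by
  have hu' : LocallyIntegrableOn (fun z => (u z : ℂ)) D :=
    Complex.ofRealCLM.locallyIntegrableOn_comp hu
  have hg' : LocallyIntegrableOn (fun z => (g z : ℂ)) D :=
    Complex.ofRealCLM.locallyIntegrableOn_comp hg
  refine ⟨hu', hg', fun φ hφ => ?_⟩
  have hφd : Differentiable ℝ φ := hφ.1.differentiable (by simp)
  have hcomp : ∀ L : ℂ →L[ℝ] ℝ,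
      L (∫ z in D, (u z : ℂ) * fderiv ℝ φ z e) = L (-∫ z in D, (g z : ℂ) * φ z) := by
    intro L
    rw [← L.integral_comp_comm ((hφ.fderiv_apply e).integrableOn_mul hu'), map_neg,
      ← L.integral_comp_comm (hφ.integrableOn_mul hg')]
    simp only [← Complex.real_smul, map_smul, smul_eq_mul]
    convert h _ (hφ.clm_comp L) using 4 with z
    exact congrArg (· e) (L.hasFDerivAt.comp z (hφd z).hasFDerivAt).fderiv.symm
  exact Complex.ext (hcomp Complex.reCLM) (hcomp Complex.imCLM)

theorem HasWeakPartialOnC.add {F F' G G' : ℂ → ℂ} {e : ℂ} (h : HasWeakPartialOnC F G e D)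
    (h' : HasWeakPartialOnC F' G' e D) :
    HasWeakPartialOnC (fun z => F z + F' z) (fun z => G z + G' z) e D := by
  refine ⟨h.1.add h'.1, h.2.1.add h'.2.1, fun φ hφ => ?_⟩
  simp only [add_mul]
  rw [integral_add ((hφ.fderiv_apply e).integrableOn_mul h.1)
      ((hφ.fderiv_apply e).integrableOn_mul h'.1),
    integral_add (hφ.integrableOn_mul h.2.1) (hφ.integrableOn_mul h'.2.1),
    h.2.2 φ hφ, h'.2.2 φ hφ, neg_add]

theorem HasWeakPartialOnC.const_mul {F G : ℂ → ℂ} {e : ℂ} (h : HasWeakPartialOnC F G e D)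
    (c : ℂ) : HasWeakPartialOnC (fun z => c * F z) (fun z => c * G z) e D := by
  refine ⟨h.1.smul c, h.2.1.smul c, fun φ hφ => ?_⟩
  simp only [mul_assoc]
  rw [integral_const_mul, integral_const_mul, h.2.2 φ hφ, mul_neg]

theorem MeasureTheory.integral_const_mul_add_const_mul {X : Type*} [MeasurableSpace X]
    {μ : Measure X} {f g : X → ℂ} (a b : ℂ) (hf : Integrable f μ) (hg : Integrable g μ) :
    ∫ x, (a * f x + b * g x) ∂μ = a * ∫ x, f x ∂μ + b * ∫ x, g x ∂μ := by
  rw [integral_add (hf.const_mul a) (hg.const_mul b), integral_const_mul, integral_const_mul]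

theorem HasWeakPartialOnC.integral_mul_wirtinger {F F₁ F₂ : ℂ → ℂ}
    (h₁ : HasWeakPartialOnC F F₁ 1 D) (h₂ : HasWeakPartialOnC F F₂ Complex.I D) (s : ℂ)
    {φ : ℂ → ℂ} (hφ : TestFunC ⊤ D φ) :
    (∫ z in D, F z * ((fderiv ℝ φ z 1 + s * Complex.I * fderiv ℝ φ z Complex.I) / 2)) =
      -∫ z in D, (F₁ z + s * Complex.I * F₂ z) / 2 * φ z := by
  calc (∫ z in D, F z * ((fderiv ℝ φ z 1 + s * Complex.I * fderiv ℝ φ z Complex.I) / 2))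
      = ∫ z in D, (1 / 2 * (F z * fderiv ℝ φ z 1)
          + s * Complex.I / 2 * (F z * fderiv ℝ φ z Complex.I)) := by
        congr 1 with z; ring
    _ = 1 / 2 * -(∫ z in D, F₁ z * φ z) + s * Complex.I / 2 * -∫ z in D, F₂ z * φ z := by
        rw [integral_const_mul_add_const_mul _ _ ((hφ.fderiv_apply 1).integrableOn_mul h₁.1)
          ((hφ.fderiv_apply _).integrableOn_mul h₁.1), h₁.2.2 φ hφ, h₂.2.2 φ hφ]
    _ = -∫ z in D, (1 / 2 * (F₁ z * φ z) + s * Complex.I / 2 * (F₂ z * φ z)) := by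
        rw [integral_const_mul_add_const_mul _ _ (hφ.integrableOn_mul h₁.2.1)
          (hφ.integrableOn_mul h₂.2.1)]
        ring
    _ = -∫ z in D, (F₁ z + s * Complex.I * F₂ z) / 2 * φ z := by
        congr 2 with z; ring

theorem HasWeakPartialOnC.hasWeakDzOn {F F₁ F₂ : ℂ → ℂ}
    (h₁ : HasWeakPartialOnC F F₁ 1 D) (h₂ : HasWeakPartialOnC F F₂ Complex.I D) :
    HasWeakDzOn F (fun z => (F₁ z - Complex.I * F₂ z) / 2) D := fun φ hφ => by
  convert h₁.integral_mul_wirtinger h₂ (-1) hφ using 4 with z <;>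
    simp only [wDz] <;> ring

theorem HasWeakPartialOnC.hasWeakDzbarOn {F F₁ F₂ : ℂ → ℂ}
    (h₁ : HasWeakPartialOnC F F₁ 1 D) (h₂ : HasWeakPartialOnC F F₂ Complex.I D) :
    HasWeakDzbarOn F (fun z => (F₁ z + Complex.I * F₂ z) / 2) D := fun φ hφ => by
  convert h₁.integral_mul_wirtinger h₂ 1 hφ using 4 with z <;>
    simp only [wDzbar] <;> ring

theorem InS22.det_one_add {M : Matrix (Fin 2) (Fin 2) ℝ} (hM : InS22 M) :
    (1 + M).det = 2 + M 0 0 + M 1 1 := by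
  obtain ⟨hsym, hdet, -⟩ := hM
  rw [det_fin_two, hsym] at hdet
  rw [det_fin_two]
  simp only [Matrix.add_apply, one_apply_eq, one_apply_ne zero_ne_one,
    one_apply_ne one_ne_zero, hsym]
  linear_combination hdet

theorem InS22.beltrami_of_eq_hodge {A : ℂ → Matrix (Fin 2) (Fin 2) ℝ} {z : ℂ}
    (hA : InS22 (A z)) (h : ℂ → ℝ) {p q : Fin 2 → ℝ}
    (hq : q = hodge (A z *ᵥ p - gradVec h z)) :
    ((p 0 + Complex.I * q 0 : ℂ) + Complex.I * (p 1 + Complex.I * q 1)) / 2 =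
      muOfA A z * (((p 0 + Complex.I * q 0 : ℂ) - Complex.I * (p 1 + Complex.I * q 1)) / 2) +
        (wDzbarR h z + muOfA A z * (starRingEnd ℂ) (wDzbarR h z)) := by
  have hΔ := hA.det_one_add
  obtain ⟨hsym, hdet, hpos⟩ := hA
  rw [det_fin_two, hsym] at hdet
  rw [hΔ] at hpos
  have hΔ0 : (2 + A z 0 0 + A z 1 1 : ℂ) ≠ 0 := by exact_mod_cast hpos.ne'
  subst hq
  simp only [muOfA, wDzbarR, gradVec, hodge, hΔ, mulVec_fin_two, hsym, Pi.sub_apply,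
    cons_val_one, cons_val_fin_one, cons_val_zero, ofReal_sub, ofReal_add, ofReal_mul,
    ofReal_ofNat, map_div₀, map_add, conj_ofReal, map_mul, conj_I]
  field_simp
  apply Complex.ext <;>
    simp only [neg_sub, ofReal_sub, ofReal_add, ofReal_mul, mul_re, mul_im, add_re, add_im,
      sub_re, sub_im, ofReal_re, ofReal_im, I_re, I_im, re_ofNat, im_ofNat, conj_re, conj_im,
      mul_zero, zero_mul, sub_zero, add_zero, zero_add, zero_sub, sub_self, one_mul, neg_zero,
      neg_mul, mul_neg, neg_re, neg_im, neg_neg, sub_neg_eq_add]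
  · linear_combination -4 * p 0 * hdet
  · linear_combination -4 * p 1 * hdet

end WeakDerivatives

theorem statement3_general
    (D : Set ℂ) (hDo : IsOpen D)
    (g : ℂ → ℝ)
    (A : ℂ → Matrix (Fin 2) (Fin 2) ℝ) (hAS : ∀ z ∈ D, InS22 (A z))
    (u : ℂ → ℝ) (gu : ℂ → Fin 2 → ℝ)
    (hu : IsWeakSolutionDiv A g u gu D ⊤)
    (v : ℂ → ℝ) (gv : ℂ → Fin 2 → ℝ)
    (hvloc : LocallyIntegrableOn v D) (hgvloc : LocallyIntegrableOn gv D)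
    (hgv : HasWeakGradientOn v gv D)
    (hconj : ∀ᵐ z ∂(volume.restrict D),
      gv z = hodge ((A z).mulVec (gu z) - gradVec (logPot g D) z)) :
    ∃ ω₁ ω₂ : ℂ → ℂ,
      HasWeakDzOn (fun z => (u z : ℂ) + Complex.I * (v z : ℂ)) ω₁ D ∧
      HasWeakDzbarOn (fun z => (u z : ℂ) + Complex.I * (v z : ℂ)) ω₂ D ∧
      ∀ᵐ z ∂(volume.restrict D), ω₂ z = muOfA A z * ω₁ z + sigmaOf g D (muOfA A) z := by
  obtain ⟨hul, hgul, hgu, -⟩ := hu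
  have hω : ∀ (i : Fin 2) (e : ℂ), HasWeakPartialOn u (gu · i) e D →
      HasWeakPartialOn v (gv · i) e D →
      HasWeakPartialOnC (fun z => (u z : ℂ) + Complex.I * (v z : ℂ))
        (fun z => (gu z i : ℂ) + Complex.I * (gv z i : ℂ)) e D := fun i _ hui hvi =>
    (hui.ofReal hul (hgul.eval i)).add ((hvi.ofReal hvloc (hgvloc.eval i)).const_mul Complex.I)
  have hω₁ := hω 0 1 hgu.1 hgv.1
  have hω₂ := hω 1 Complex.I hgu.2 hgv.2
  refine ⟨_, _, hω₁.hasWeakDzOn hω₂, hω₁.hasWeakDzbarOn hω₂, ?_⟩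
  filter_upwards [hconj, ae_restrict_mem hDo.measurableSet] with z hz hzD
  exact (hAS z hzD).beltrami_of_eq_hodge _ hz

/-- Lemma 3, direct part: if `u` is a weak solution of `div(A∇u) = g`
and `v` is `A`-conjugate of `u`, then `ω = u + iv` satisfies the nondegenerate
inhomogeneous Beltrami equation `ω_z̄ = μ ω_z + σ` with
`μ = (a₂₂ − a₁₁ − 2 i a₂₁)/det(I+A)` and `σ = 𝒩^g_z̄ + μ conj(𝒩^g_z̄)`. -/
theorem statement3
    (D : Set ℂ) (hDo : IsOpen D) (hDc : IsConnected D) (hDb : IsBounded D)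
    (g : ℂ → ℝ) (hg : IntegrableOn g D)
    (A : ℂ → Matrix (Fin 2) (Fin 2) ℝ) (hAS : ∀ z ∈ D, InS22 (A z))
    (hAm : ∀ i j, Measurable fun z => A z i j)
    (hAb : ∃ C : ℝ, ∀ z ∈ D, ∀ i j, |A z i j| ≤ C)
    (u : ℂ → ℝ) (gu : ℂ → Fin 2 → ℝ)
    (hu : IsWeakSolutionDiv A g u gu D ⊤)
    (v : ℂ → ℝ) (gv : ℂ → Fin 2 → ℝ)
    (hvloc : LocallyIntegrableOn v D) (hgvloc : LocallyIntegrableOn gv D)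
    (hgv : HasWeakGradientOn v gv D)
    (hconj : ∀ᵐ z ∂(volume.restrict D),
      gv z = hodge ((A z).mulVec (gu z) - gradVec (logPot g D) z)) :
    ∃ ω₁ ω₂ : ℂ → ℂ,
      HasWeakDzOn (fun z => (u z : ℂ) + Complex.I * (v z : ℂ)) ω₁ D ∧
      HasWeakDzbarOn (fun z => (u z : ℂ) + Complex.I * (v z : ℂ)) ω₂ D ∧
      ∀ᵐ z ∂(volume.restrict D), ω₂ z = muOfA A z * ω₁ z + sigmaOf g D (muOfA A) z :=
  statement3_general D hDo g A hAS u gu hu v gv hvloc hgvloc hgv hconj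

end
end

section
/- Let D be a Jordan domain with the quasihyperbolic boundary condition whose boundary has a tangent q.e., let ν : ∂D → ℂ with |ν| ≡ 1 be of class CBV(∂D), let u be a solution of class C^{1,γ}_loc of the Poincare problem with boundary data φ, i.e., the angular limit lim_{z→ζ, z∈D} ∂u/∂ν(z) = φ(ζ) holds at a boundary point ζ with finite φ(ζ), and suppose Re{n(ζ)·conj(ν(ζ))} > 0, where n(ζ) is the inner normal to ∂D at ζ. Then there is a finite limit u(ζ) of u(z) as z → ζ in D along the straight line passing through ζ parallel to ν, and the directional derivative ∂u/∂ν(ζ) := lim_{t→0} (u(ζ + t·ν) − u(ζ))/t exists and equals φ(ζ). -/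
/-!
Put `a = ⟪n, ν⟫ > 0`. Since `∂D` has the tangent `i n` at `ζ`, boundary points `w` near `ζ`
satisfy `|⟪n, w - ζ⟫| ≤ (a / 2) |w - ζ|`, so a point `ζ + v` with `⟪n, v⟫ ≥ a |v|` lies at
distance at least `(a / 4) |v|` from `∂D`. The segment from `ζ + t n ∈ D` to `ζ + t ν` consists
of such points, hence misses `∂D` and lies in `D`; thus `ζ + t ν` approaches `ζ` inside a Stolz
angle and `∂u/∂ν (ζ + t ν) → φ(ζ)`. The function `g t = u (ζ + t ν)` then has a bounded
derivative near `0⁺`, so it is Lipschitz there and extends continuously to `0`, and the extension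
has right derivative `φ(ζ)` at `0` because its derivative converges to `φ(ζ)`.
-/

open MeasureTheory Set Filter Topology Metric Complex Bornology Matrix

noncomputable section

open scoped InnerProductSpace ComplexConjugate

theorem IsPreconnected.subset_interior_of_disjoint_frontier {X : Type*} [TopologicalSpace X]
    {s D : Set X} (hs : IsPreconnected s) (hsD : (s ∩ D).Nonempty)
    (hdisj : Disjoint s (frontier D)) : s ⊆ interior D := by
  have hint : ∀ x ∈ s, x ∈ closure D → x ∈ interior D := fun x hx hxD => by
    rw [← closure_sdiff_frontier]
    exact ⟨hxD, hdisj.notMem_of_mem_left hx⟩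
  obtain ⟨x, hxs, hxD⟩ := hsD
  refine hs.subset_of_closure_inter_subset isOpen_interior
    ⟨x, hxs, hint x hxs (subset_closure hxD)⟩ fun y ⟨hy, hys⟩ => ?_
  exact hint y hys (closure_mono interior_subset hy)

theorem exists_tendsto_and_tendsto_slope_of_tendsto_deriv {g g' : ℝ → ℝ} {φ : ℝ}
    (hg : ∀ᶠ t in 𝓝[>] 0, HasDerivAt g (g' t) t) (hg' : Tendsto g' (𝓝[>] 0) (𝓝 φ)) :
    ∃ L : ℝ, Tendsto g (𝓝[>] 0) (𝓝 L) ∧ Tendsto (fun t => (g t - L) / t) (𝓝[>] 0) (𝓝 φ) := by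
  have hbdd : ∀ᶠ t in 𝓝[>] 0, ‖g' t‖₊ ≤ ‖φ‖₊ + 1 :=
    hg'.nnnorm.eventually (eventually_le_nhds (lt_add_one _))
  obtain ⟨b, hb, hsub⟩ := mem_nhdsGT_iff_exists_Ioo_subset.1 (hg.and hbdd)
  have hlip : LipschitzOnWith (‖φ‖₊ + 1) g (Ioo 0 b) :=
    (convex_Ioo 0 b).lipschitzOnWith_of_nnnorm_hasDerivWithin_le
      (fun t ht => (hsub ht).1.hasDerivWithinAt) fun t ht => (hsub ht).2
  obtain ⟨G, hGlip, hGg⟩ := hlip.extend_real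
  have hGg_ev : g =ᶠ[𝓝[>] 0] G := eventuallyEq_of_mem (Ioo_mem_nhdsGT hb) hGg
  have hG : ∀ t ∈ Ioo 0 b, HasDerivAt G (g' t) t := fun t ht =>
    (hsub ht).1.congr_of_eventuallyEq
      (eventuallyEq_of_mem (isOpen_Ioo.mem_nhds ht) hGg).symm
  have hGderiv : HasDerivWithinAt G φ (Ioi 0) 0 := by
    refine (hasDerivWithinAt_Ici_of_tendsto_deriv (s := Ioo 0 b)
      (fun t ht => (hG t ht).differentiableAt.differentiableWithinAt)
      hGlip.continuous.continuousWithinAt (Ioo_mem_nhdsGT hb) ?_).Ioi_of_Ici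
    refine hg'.congr' (eventuallyEq_of_mem (Ioo_mem_nhdsGT hb) fun t ht => ?_)
    exact (hG t ht).deriv.symm
  refine ⟨G 0, ((hGlip.continuous.tendsto 0).mono_left nhdsWithin_le_nhds).congr' hGg_ev.symm,
    ?_⟩
  refine ((hasDerivWithinAt_iff_tendsto_slope' (lt_irrefl 0)).1 hGderiv).congr' ?_
  filter_upwards [hGg_ev] with t ht
  rw [slope_def_field, ht, sub_zero]

section ConeGeometry

variable {E : Type*} [NormedAddCommGroup E] [InnerProductSpace ℝ E]

theorem le_dist_of_mul_norm_le_inner {F : Set E} {ζ n v w : E} {c δ : ℝ} (hn : ‖n‖ = 1)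
    (hF : ∀ w ∈ F, ‖w - ζ‖ < δ → |⟪n, w - ζ⟫_ℝ| ≤ c / 2 * ‖w - ζ‖)
    (hv : c * ‖v‖ ≤ ⟪n, v⟫_ℝ) (hvδ : ‖v‖ < δ / 2) (hw : w ∈ F) :
    c / 4 * ‖v‖ ≤ dist (ζ + v) w := by
  have hcv : c * ‖v‖ ≤ ‖v‖ :=
    hv.trans ((real_inner_le_norm n v).trans (by rw [hn, one_mul]))
  have hwζ : ‖w - ζ‖ ≤ dist (ζ + v) w + ‖v‖ := by
    rw [dist_eq_norm, ← norm_neg (ζ + v - w)]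
    exact (norm_add_le _ v).trans_eq' (by abel_nf)
  rcases lt_or_ge ‖w - ζ‖ δ with hnear | hfar
  · have hinner : ⟪n, ζ + v - w⟫_ℝ ≤ dist (ζ + v) w :=
      (real_inner_le_norm n _).trans (by rw [hn, one_mul, dist_eq_norm])
    have hsplit : ⟪n, ζ + v - w⟫_ℝ = ⟪n, v⟫_ℝ - ⟪n, w - ζ⟫_ℝ := by
      rw [← inner_sub_right]; congr 1; abel
    have hflat := (abs_le.1 (hF w hw hnear)).2
    nlinarith [dist_nonneg (x := ζ + v) (y := w), norm_nonneg v]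
  · nlinarith [norm_nonneg v]

theorem segment_smul_subset_cone {n ν : E} (hn : ‖n‖ = 1) (hν : ‖ν‖ = 1) {t : ℝ} (ht : 0 ≤ t) :
    segment ℝ (t • n) (t • ν) ⊆ {v | ⟪n, ν⟫_ℝ * t ≤ ⟪n, v⟫_ℝ} ∩ closedBall 0 t := by
  have hconv : Convex ℝ ({v | ⟪n, ν⟫_ℝ * t ≤ ⟪n, v⟫_ℝ} ∩ closedBall (0 : E) t) :=
    (convex_halfSpace_ge (innerₛₗ ℝ n).isLinear _).inter (convex_closedBall 0 t)
  have hnν : ⟪n, ν⟫_ℝ ≤ 1 := (real_inner_le_norm n ν).trans (by rw [hn, hν, one_mul])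
  refine hconv.segment_subset ⟨?_, ?_⟩ ⟨?_, ?_⟩
  · rw [mem_ofPred_eq, inner_smul_right, real_inner_self_eq_norm_sq, hn]; nlinarith
  · rw [mem_closedBall_zero_iff, norm_smul, hn, Real.norm_of_nonneg ht, mul_one]
  · rw [mem_ofPred_eq, inner_smul_right, mul_comm]
  · rw [mem_closedBall_zero_iff, norm_smul, hν, Real.norm_of_nonneg ht, mul_one]

theorem add_smul_mem_of_add_smul_normal_mem {D : Set E} {ζ n ν : E} {δ t : ℝ} (hn : ‖n‖ = 1)
    (hν : ‖ν‖ = 1) (hnν : 0 < ⟪n, ν⟫_ℝ)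
    (hflat : ∀ w ∈ frontier D, ‖w - ζ‖ < δ → |⟪n, w - ζ⟫_ℝ| ≤ ⟪n, ν⟫_ℝ / 2 * ‖w - ζ‖)
    (ht : t ∈ Ioo 0 (δ / 2)) (htn : ζ + t • n ∈ D) : ζ + t • ν ∈ D := by
  suffices Disjoint (segment ℝ (ζ + t • n) (ζ + t • ν)) (frontier D) from
    interior_subset <| (convex_segment _ _).isPreconnected.subset_interior_of_disjoint_frontier
      ⟨_, left_mem_segment ℝ _ _, htn⟩ this (right_mem_segment ℝ _ _)
  refine Set.disjoint_left.2 fun x hx hxD => ?_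
  obtain ⟨v, rfl⟩ : ∃ v, x = ζ + v := ⟨x - ζ, by abel⟩
  obtain ⟨hvn, hvt⟩ := segment_smul_subset_cone hn hν ht.1.le ((mem_segment_translate ℝ ζ).1 hx)
  rw [mem_ofPred_eq] at hvn
  rw [mem_closedBall_zero_iff] at hvt
  have hcone : ⟪n, ν⟫_ℝ * ‖v‖ ≤ ⟪n, v⟫_ℝ := (mul_le_mul_of_nonneg_left hvt hnν.le).trans hvn
  have h := le_dist_of_mul_norm_le_inner hn hflat hcone (hvt.trans_lt ht.2) hxD
  rw [dist_self] at h
  have hv0 : v = 0 := norm_eq_zero.1 <| le_antisymm (by nlinarith [norm_nonneg v]) (norm_nonneg v)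
  rw [hv0, inner_zero_right] at hvn
  nlinarith [ht.1]

end ConeGeometry

theorem TangentDirAt.abs_inner_sub_le {D : Set ℂ} {ζ n : ℂ} (h : TangentDirAt D ζ (I * n))
    {ε : ℝ} (hε : 0 < ε) :
    ∃ δ > 0, ∀ w ∈ frontier D, ‖w - ζ‖ < δ → |⟪n, w - ζ⟫_ℝ| ≤ ε * ‖w - ζ‖ := by
  have hn : ‖n‖ = 1 := by simpa using h.1
  have hinv : (I * n)⁻¹ = -I * conj n := by
    refine inv_eq_of_mul_eq_one_right ?_
    rw [show I * n * (-I * conj n) = -(I * I) * (n * conj n) by ring, Complex.mul_conj,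
      Complex.normSq_eq_norm_sq, hn, I_mul_I]
    norm_num
  obtain ⟨δ, hδ, hflat⟩ := h.2 ε hε
  refine ⟨δ, hδ, fun w hw hwδ => ?_⟩
  have him : ((w - ζ) / (I * n)).im = -⟪n, w - ζ⟫_ℝ := by
    rw [div_eq_mul_inv, hinv, Complex.inner]
    simp only [mul_im, mul_re, neg_re, neg_im, I_re, I_im, conj_re, conj_im]
    ring
  simpa only [him, abs_neg] using hflat w hw hwδ

/-- The approach region of `AngularLimitAt` with aperture constant `c`. -/
def stolzRegion (D : Set ℂ) (ζ : ℂ) (c : ℝ) : Set ℂ :=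
  {z | z ∈ D ∧ ‖z - ζ‖ ≤ c * infDist z (frontier D)}

theorem IsInnerNormalAt.exists_eventually_mem_stolzRegion {D : Set ℂ} {ζ n ν : ℂ}
    (hn : IsInnerNormalAt D ζ n) (hζ : ζ ∈ frontier D) (hν : ‖ν‖ = 1) (hnν : 0 < ⟪n, ν⟫_ℝ) :
    ∃ c > 1, ∀ᶠ t : ℝ in 𝓝[>] 0, ζ + t * ν ∈ stolzRegion D ζ c := by
  obtain ⟨hn1, htan, ε, hε, hray⟩ := hn
  obtain ⟨δ, hδ, hflat⟩ := htan.abs_inner_sub_le (half_pos hnν)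
  have hnν1 : ⟪n, ν⟫_ℝ ≤ 1 := (real_inner_le_norm n ν).trans (by rw [hn1, hν, one_mul])
  refine ⟨4 / ⟪n, ν⟫_ℝ, (one_lt_div hnν).2 (by linarith), ?_⟩
  filter_upwards [Ioo_mem_nhdsGT (lt_min hε (half_pos hδ))] with t ht
  have ht' : t ∈ Ioo 0 (δ / 2) := ⟨ht.1, ht.2.trans_le (min_le_right _ _)⟩
  have htν : ‖t • ν‖ = t := by rw [norm_smul, hν, mul_one, Real.norm_of_nonneg ht.1.le]
  have hmem : ζ + t • ν ∈ D := by
    refine add_smul_mem_of_add_smul_normal_mem hn1 hν hnν hflat ht' ?_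
    rw [Complex.real_smul]
    exact hray t ⟨ht.1, ht.2.trans_le (min_le_left _ _)⟩
  have hdist : ⟪n, ν⟫_ℝ / 4 * t ≤ infDist (ζ + t • ν) (frontier D) := by
    have hcone : ⟪n, ν⟫_ℝ * ‖t • ν‖ ≤ ⟪n, t • ν⟫_ℝ := by rw [htν, inner_smul_right, mul_comm]
    refine (le_infDist ⟨ζ, hζ⟩).2 fun w hw => ?_
    simpa only [htν] using
      le_dist_of_mul_norm_le_inner hn1 hflat hcone (by rw [htν]; exact ht'.2) hw
  rw [← Complex.real_smul]
  refine ⟨hmem, ?_⟩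
  rw [add_sub_cancel_left, htν, div_mul_eq_mul_div, le_div_iff₀' hnν]
  linarith

theorem MemC1HolderLocOn.differentiableAt {u : ℂ → ℝ} {a : ℝ} {D : Set ℂ}
    (hu : MemC1HolderLocOn u a D) {z : ℂ} (hz : z ∈ D) : DifferentiableAt ℝ u z := by
  obtain ⟨U, hUo, hzU, -, hC1, -⟩ := hu z hz
  exact (hC1.contDiffAt (hUo.mem_nhds hzU)).differentiableAt one_ne_zero

theorem statement12_general
    (D : Set ℂ)
    (ν : ℂ → ℂ) (hν1 : ∀ ξ ∈ frontier D, ‖ν ξ‖ = 1)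
    (γ : ℝ) (u : ℂ → ℝ) (hu : MemC1HolderLocOn u γ D)
    (ζ : ℂ) (hζ : ζ ∈ frontier D) (φζ : ℝ)
    (hlim : AngularLimitAt (fun z => fderiv ℝ u z (ν ζ)) D ζ φζ)
    (n : ℂ) (hn : IsInnerNormalAt D ζ n)
    (hpos : 0 < (n * (starRingEnd ℂ) (ν ζ)).re) :
    ∃ L : ℝ,
      Tendsto (fun t : ℝ => u (ζ + (t : ℂ) * ν ζ)) (𝓝[>] 0) (𝓝 L) ∧
      Tendsto (fun t : ℝ => (u (ζ + (t : ℂ) * ν ζ) - L) / t) (𝓝[>] 0) (𝓝 φζ) := by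
  have hnν : 0 < ⟪n, ν ζ⟫_ℝ := by rwa [real_inner_comm, Complex.inner]
  obtain ⟨c, hc, hray⟩ := hn.exists_eventually_mem_stolzRegion hζ (hν1 ζ hζ) hnν
  have hline : ∀ t : ℝ, HasDerivAt (fun s : ℝ => ζ + s * ν ζ) (ν ζ) t := fun t => by
    simpa using ((hasDerivAt_id t).ofReal_comp.mul_const (ν ζ)).const_add ζ
  have happroach : Tendsto (fun t : ℝ => ζ + t * ν ζ) (𝓝[>] 0) (𝓝[stolzRegion D ζ c] ζ) := by
    refine tendsto_nhdsWithin_iff.2 ⟨?_, hray⟩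
    simpa using (hline 0).continuousAt.tendsto.mono_left nhdsWithin_le_nhds
  refine exists_tendsto_and_tendsto_slope_of_tendsto_deriv ?_ ((hlim c hc).comp happroach)
  filter_upwards [hray] with t ht
  exact (hu.differentiableAt ht.1).hasFDerivAt.comp_hasDerivAt t (hline t)

/-- Remark 9: if `u ∈ C^{1,γ}_loc(D)` has the angular limit
`∂u/∂ν(z) → φ(ζ)` at a boundary point `ζ` and `Re(n(ζ)·conj(ν(ζ))) > 0` for the inner
normal `n(ζ)`, then `u` has a finite limit `u(ζ)` along the straight line through `ζ`
parallel to `ν`, and the directional derivative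
`∂u/∂ν(ζ) = lim_{t→0} (u(ζ + tν) − u(ζ))/t` exists and equals `φ(ζ)`. -/
theorem statement12
    (D : Set ℂ) (hJ : JordanDomain D) (hQH : QuasihyperbolicBC D)
    (htan : QEOn (frontier D) (fun ξ => HasTangentAt D ξ))
    (ν : ℂ → ℂ) (hν1 : ∀ ξ ∈ frontier D, ‖ν ξ‖ = 1)
    (hνBV : CBVOn ν (frontier D))
    (γ : ℝ) (u : ℂ → ℝ) (hu : MemC1HolderLocOn u γ D)
    (ζ : ℂ) (hζ : ζ ∈ frontier D) (φζ : ℝ)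
    (hlim : AngularLimitAt (fun z => fderiv ℝ u z (ν ζ)) D ζ φζ)
    (n : ℂ) (hn : IsInnerNormalAt D ζ n)
    (hpos : 0 < (n * (starRingEnd ℂ) (ν ζ)).re) :
    ∃ L : ℝ,
      Tendsto (fun t : ℝ => u (ζ + (t : ℂ) * ν ζ)) (𝓝[>] 0) (𝓝 L) ∧
      Tendsto (fun t : ℝ => (u (ζ + (t : ℂ) * ν ζ) - L) / t) (𝓝[>] 0) (𝓝 φζ) :=
  statement12_general D ν hν1 γ u hu ζ hζ φζ hlim n hn hpos

end
end
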